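/- For all integers g ≥ 1 and n ≥ 2, the strict inequality Σ_{i=0}^{min(n,2g)} C(2g, i) · (n+1−i) < C(2g+n+1, n) holds, where C(a,b) denotes the binomial coefficient. (Interpretation: for a smooth projective complex curve C of genus g ≥ 1, the total dimension of the cohomology of the n-th symmetric product of C, which equals the left-hand side, is strictly smaller than the dimension of the n-th symmetric power of the cohomology of C, which equals the right-hand side.) -/
import Mathlib

/-- Hockey stick identity. -/
lemma hockey (m : ℕ) : ∀ n : ℕ,
    ∑ i ∈ Finset.range (n + 1), Nat.choose (m + i) i = Nat.choose (m + n + 1) n := by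
  intro n
  induction n with
  | zero => simp
  | succ n ih =>
    rw [Finset.sum_range_succ, ih]
    have h1 : m + (n + 1) = m + n + 1 := by omega
    have h2 : m + (n + 1) + 1 = (m + n + 1) + 1 := by omega
    rw [h1]
    exact (Nat.choose_succ_succ' (m + n + 1) n).symm

lemma weighted (m : ℕ) : ∀ n : ℕ,
    ∑ i ∈ Finset.range (n + 1), Nat.choose (m + i) i * (n + 1 - i) =
      Nat.choose (m + n + 2) n := by
  intro n
  induction n with
  | zero => simp
  | succ n ih =>
    have key : ∀ i ∈ Finset.range (n + 2),
        Nat.choose (m + i) i * (n + 2 - i) =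
          Nat.choose (m + i) i * (n + 1 - i) + Nat.choose (m + i) i := by
      intro i hi
      rw [Finset.mem_range] at hi
      have : n + 2 - i = (n + 1 - i) + 1 := by omega
      rw [this, Nat.mul_succ]
    have h12 : n + 1 + 1 = n + 2 := rfl
    rw [h12, Finset.sum_congr rfl key, Finset.sum_add_distrib]
    rw [Finset.sum_range_succ (fun i => Nat.choose (m + i) i * (n + 1 - i))]
    simp only [Nat.sub_self, Nat.mul_zero, Nat.add_zero]
    rw [ih, hockey m (n + 1)]
    have h1 : m + (n + 1) + 1 = (m + n + 2) := by omega
    have h2 : m + (n + 1) + 2 = (m + n + 2) + 1 := by omega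
    rw [h1, h2, Nat.choose_succ_succ' (m + n + 2) n]

/-- For integers `g ≥ 1` and `n ≥ 2`, we have the strict inequality
`Σ_{i = 0}^{min(n, 2g)} C(2g, i) · (n + 1 - i) < C(2g + n + 1, n)`.
(The left-hand side is the total dimension of the cohomology of the `n`-th symmetric product
of a smooth projective complex curve of genus `g`, and the right-hand side is the dimension of
the `n`-th symmetric power of the cohomology of the curve.) -/
theorem sum_choose_mul_lt_choose (g n : ℕ) (hg : 1 ≤ g) (hn : 2 ≤ n) :
    ∑ i ∈ Finset.range (min n (2 * g) + 1), Nat.choose (2 * g) i * (n + 1 - i) <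
      Nat.choose (2 * g + n + 1) n := by
  -- extend the sum to range (n+1): extra terms vanish
  have hext : ∑ i ∈ Finset.range (min n (2 * g) + 1), Nat.choose (2 * g) i * (n + 1 - i)
      = ∑ i ∈ Finset.range (n + 1), Nat.choose (2 * g) i * (n + 1 - i) := by
    apply Finset.sum_subset
    · apply Finset.range_subset_range.2; omega
    · intro i hmem hni
      rw [Finset.mem_range] at hmem hni
      have : 2 * g < i := by omega
      rw [Nat.choose_eq_zero_of_lt this, Nat.zero_mul]
  rw [hext]
  have hid : Nat.choose (2 * g + n + 1) n
      = ∑ i ∈ Finset.range (n + 1), Nat.choose (2 * g - 1 + i) i * (n + 1 - i) := by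
    rw [weighted (2 * g - 1) n]
    congr 1
    omega
  rw [hid]
  apply Finset.sum_lt_sum
  · intro i _
    match i with
    | 0 => simp
    | Nat.succ j =>
      have h := Nat.choose_le_choose (j + 1) (by omega : 2 * g ≤ 2 * g - 1 + (j + 1))
      exact Nat.mul_le_mul_right _ h
  · refine ⟨2, by rw [Finset.mem_range]; omega, ?_⟩
    have h2 : 2 * g - 1 + 2 = 2 * g + 1 := by omega
    rw [h2]
    have h3 : Nat.choose (2 * g + 1) 2 = Nat.choose (2 * g) 1 + Nat.choose (2 * g) 2 :=
      Nat.choose_succ_succ (2 * g) 1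
    apply Nat.mul_lt_mul_of_pos_right
    · rw [h3]
      have : 0 < Nat.choose (2 * g) 1 := by rw [Nat.choose_one_right]; omega
      omega
    · omega
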